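/- Let H be a complex Hilbert space and H₁, …, Hₙ nonzero, linearly independent closed subspaces of H with orthogonal projections P₁, …, Pₙ. Let α₁, …, αₙ and ε be positive real numbers. If α₁P₁ + … + αₙPₙ ≥ ε·I (as selfadjoint operators), then α₁P₁ + … + αₙPₙ ≤ (Σ_{i=1}^{n} α_i − (n−1)ε)·I. -/

import Mathlib

/-- The orthogonal projection of a Hilbert space `H` onto a complete (closed) subspace `K`,
viewed as a continuous linear operator `H →L[ℂ] H`. -/
noncomputable def proj {H : Type*} [NormedAddCommGroup H] [InnerProductSpace ℂ H]
    (K : Submodule ℂ H) [CompleteSpace K] : H →L[ℂ] H :=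
  K.subtypeL.comp K.orthogonalProjection

/-!
Let `T : ⨁ᵢ Hᵢ → H` be `T ξ = ∑ √αᵢ ξᵢ` on the Hilbert direct sum, so that `T T* = ∑ αᵢ Pᵢ`.
The hypothesis says `‖T* x‖² ≥ ε ‖x‖²`, so `T T*` is invertible; as `T` is injective
(linear independence), `T*` is onto, and this turns the lower bound into `‖T ξ‖² ≥ ε ‖ξ‖²`.
Thus `B = T* T - ε` is positive, and its diagonal blocks are `(αᵢ - ε) I` (so `αᵢ ≥ ε`, the
`Hᵢ` being nonzero). Writing `B = R* R`, the triangle inequality and Cauchy–Schwarz give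
`⟪B ξ, ξ⟫ = ‖∑ R ξᵢ‖² ≤ (∑ √(αᵢ - ε) ‖ξᵢ‖)² ≤ ∑ (αᵢ - ε) ‖ξ‖²`, i.e.
`T* T ≤ ∑ αᵢ - (n - 1) ε`, and `‖T*‖ = ‖T‖` carries this bound over to `T T*`.
-/

open scoped InnerProductSpace

lemma proj_eq_starProjection {H : Type*} [NormedAddCommGroup H] [InnerProductSpace ℂ H]
    (K : Submodule ℂ H) [CompleteSpace K] : proj K = K.starProjection :=
  rfl

lemma PiLp.sum_single {ι : Type*} [Fintype ι] [DecidableEq ι] {β : ι → Type*}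
    [∀ i, AddCommGroup (β i)] (p : ENNReal) (x : PiLp p β) :
    ∑ i, PiLp.single p i (x i) = x := by
  simp_rw [← PiLp.toLp_single, ← WithLp.toLp_sum, Finset.univ_sum_single]

namespace ContinuousLinearMap

section RCLike

variable {𝕜 E F : Type*} [RCLike 𝕜] [NormedAddCommGroup E] [InnerProductSpace 𝕜 E]
  [CompleteSpace E] [NormedAddCommGroup F] [InnerProductSpace 𝕜 F] [CompleteSpace F]

lemma adjoint_surjective_of_injective {T : E →L[𝕜] F} (hT : Function.Injective T) {ε : ℝ}
    (hε : 0 < ε) (h : ∀ y, ε * ‖y‖ ^ 2 ≤ ‖adjoint T y‖ ^ 2) :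
    Function.Surjective (adjoint T) := by
  have hunit : IsUnit (T ∘L adjoint T) := by
    refine isUnit_of_forall_le_norm_inner_map _ (c := ⟨ε, hε.le⟩) hε fun y => ?_
    calc ‖y‖ ^ 2 * ε ≤ ‖adjoint T y‖ ^ 2 := by rw [mul_comm]; exact h y
      _ = RCLike.re ⟪(T ∘L adjoint T) y, y⟫_𝕜 := by
        rw [apply_norm_sq_eq_inner_adjoint_left, adjoint_adjoint]
      _ ≤ ‖⟪(T ∘L adjoint T) y, y⟫_𝕜‖ := RCLike.re_le_norm _
  obtain ⟨u, hu⟩ := hunit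
  intro x
  refine ⟨(↑u⁻¹ : F →L[𝕜] F) (T x), hT ?_⟩
  change (T ∘L adjoint T) _ = T x
  rw [← hu, ← mul_apply_eq_comp, u.mul_inv, one_apply_eq_self]

lemma mul_sq_norm_le_of_adjoint {T : E →L[𝕜] F} (hT : Function.Injective T) {ε : ℝ}
    (hε : 0 < ε) (h : ∀ y, ε * ‖y‖ ^ 2 ≤ ‖adjoint T y‖ ^ 2) (x : E) :
    ε * ‖x‖ ^ 2 ≤ ‖T x‖ ^ 2 := by
  obtain ⟨y, rfl⟩ := adjoint_surjective_of_injective hT hε h x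
  have hCS : ‖adjoint T y‖ ^ 2 ≤ ‖T (adjoint T y)‖ * ‖y‖ := by
    calc ‖adjoint T y‖ ^ 2 = RCLike.re ⟪T (adjoint T y), y⟫_𝕜 := by
          rw [apply_norm_sq_eq_inner_adjoint_left, adjoint_adjoint]; rfl
      _ ≤ ‖T (adjoint T y)‖ * ‖y‖ := (RCLike.re_le_norm _).trans (norm_inner_le_norm _ _)
  rcases (sq_nonneg ‖adjoint T y‖).eq_or_lt with h0 | hpos
  · rw [← h0, mul_zero]; positivity
  have hsq : (‖adjoint T y‖ ^ 2) ^ 2 ≤ ‖T (adjoint T y)‖ ^ 2 * ‖y‖ ^ 2 := by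
    rw [← mul_pow]; exact pow_le_pow_left₀ hpos.le hCS 2
  refine le_of_mul_le_mul_right ?_ hpos
  nlinarith [h y, sq_nonneg ‖T (adjoint T y)‖]

lemma sq_norm_adjoint_apply_le {T : E →L[𝕜] F} {C : ℝ} (hC : 0 ≤ C)
    (h : ∀ x, ‖T x‖ ^ 2 ≤ C * ‖x‖ ^ 2) (y : F) : ‖adjoint T y‖ ^ 2 ≤ C * ‖y‖ ^ 2 := by
  have hT : ‖T‖ ≤ √C := opNorm_le_bound _ (Real.sqrt_nonneg C) fun x => by
    rw [← Real.sqrt_sq (norm_nonneg (T x)), ← Real.sqrt_sq (norm_nonneg x), ← Real.sqrt_mul hC]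
    exact Real.sqrt_le_sqrt (h x)
  calc ‖adjoint T y‖ ^ 2 ≤ (‖T‖ * ‖y‖) ^ 2 := by
        rw [← adjoint.norm_map T]; gcongr; exact le_opNorm _ _
    _ ≤ (√C * ‖y‖) ^ 2 := by gcongr
    _ = C * ‖y‖ ^ 2 := by rw [mul_pow, Real.sq_sqrt hC]

end RCLike

variable {E F : Type*} [NormedAddCommGroup E] [InnerProductSpace ℂ E] [CompleteSpace E]
  [NormedAddCommGroup F] [InnerProductSpace ℂ F] [CompleteSpace F]

lemma IsPositive.reApplyInnerSelf_sum_le {B : E →L[ℂ] E} (hB : B.IsPositive) {ι : Type*}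
    (s : Finset ι) (v : ι → E) :
    B.reApplyInnerSelf (∑ i ∈ s, v i) ≤ (∑ i ∈ s, √(B.reApplyInnerSelf (v i))) ^ 2 := by
  obtain ⟨R, rfl⟩ :=
    CStarAlgebra.nonneg_iff_eq_star_mul_self.mp ((nonneg_iff_isPositive B).mpr hB)
  have hR : ∀ x, (star R * R).reApplyInnerSelf x = ‖R x‖ ^ 2 := fun x =>
    (apply_norm_sq_eq_inner_adjoint_left R x).symm
  simp only [hR, Real.sqrt_sq (norm_nonneg _), map_sum]
  gcongr
  exact norm_sum_le _ _

lemma sq_norm_apply_sum_sub_le {T : E →L[ℂ] F} {ε : ℝ} (h : ∀ x, ε * ‖x‖ ^ 2 ≤ ‖T x‖ ^ 2)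
    {ι : Type*} (s : Finset ι) (v : ι → E) :
    ‖T (∑ i ∈ s, v i)‖ ^ 2 - ε * ‖∑ i ∈ s, v i‖ ^ 2 ≤
      (∑ i ∈ s, √(‖T (v i)‖ ^ 2 - ε * ‖v i‖ ^ 2)) ^ 2 := by
  set B : E →L[ℂ] E := adjoint T ∘L T - (ε : ℂ) • 1
  have hB : ∀ x, B.reApplyInnerSelf x = ‖T x‖ ^ 2 - ε * ‖x‖ ^ 2 := fun x => by
    rw [reApplyInnerSelf_apply, sub_apply, inner_sub_left, map_sub,
      ← apply_norm_sq_eq_inner_adjoint_left, smul_apply, one_apply_eq_self, inner_smul_left,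
      Complex.conj_ofReal, inner_self_eq_norm_sq_to_K, RCLike.re_to_complex,
      Complex.re_ofReal_mul, ← RCLike.ofReal_pow]
    rfl
  have hBpos : B.IsPositive := by
    refine isPositive_def'.mpr ⟨?_, fun x => by rw [hB]; linarith [h x]⟩
    exact (isPositive_adjoint_comp_self T).isSelfAdjoint.sub
      (IsSelfAdjoint.smul (Complex.conj_ofReal ε) (IsSelfAdjoint.one _))
  simpa only [hB] using hBpos.reApplyInnerSelf_sum_le s v

end ContinuousLinearMap

section WeightedSum

open ContinuousLinearMap

variable {H : Type*} [NormedAddCommGroup H] [InnerProductSpace ℂ H]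
  {ι : Type*} (K : ι → Submodule ℂ H) (c : ι → ℝ)

noncomputable def weightedProj [∀ i, CompleteSpace (K i)] : H →L[ℂ] PiLp 2 (fun i => K i) :=
  ((PiLp.continuousLinearEquiv 2 ℂ (fun i => K i)).symm : (∀ i, K i) →L[ℂ] _) ∘L
    ContinuousLinearMap.pi fun i => (c i : ℂ) • (K i).orthogonalProjectionOnto

lemma weightedProj_apply [∀ i, CompleteSpace (K i)] (x : H) (i : ι) :
    weightedProj K c x i = (c i : ℂ) • (K i).orthogonalProjectionOnto x := by
  simp [weightedProj]

variable [Fintype ι]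

noncomputable def weightedSum : PiLp 2 (fun i => K i) →L[ℂ] H :=
  ∑ i, (c i : ℂ) • ((K i).subtypeL ∘L PiLp.proj 2 (fun i => K i) i)

variable {K c}

lemma weightedSum_apply (η : PiLp 2 (fun i => K i)) :
    weightedSum K c η = ∑ i, (c i : ℂ) • (η i : H) := by
  simp [weightedSum]

lemma weightedSum_single [DecidableEq ι] (i : ι) (u : K i) :
    weightedSum K c (PiLp.single 2 i u) = (c i : ℂ) • (u : H) := by
  rw [weightedSum_apply, Finset.sum_eq_single i
    (fun j _ hj => by rw [PiLp.single_eq_of_ne 2 hj, ZeroMemClass.coe_zero, smul_zero])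
    (fun hi => absurd (Finset.mem_univ i) hi), PiLp.single_eq_same]

lemma weightedSum_injective (hc : ∀ i, c i ≠ 0)
    (hind : ∀ x : ι → H, (∀ i, x i ∈ K i) → ∑ i, x i = 0 → ∀ i, x i = 0) :
    Function.Injective (weightedSum K c) := by
  refine (injective_iff_map_eq_zero _).mpr fun η hη => PiLp.ext fun i => ?_
  rw [weightedSum_apply] at hη
  simpa [hc i] using hind _ (fun i => (K i).smul_mem _ (η i).2) hη i

lemma le_sq_weight_of_ne_bot {ε : ℝ} (h : ∀ η, ε * ‖η‖ ^ 2 ≤ ‖weightedSum K c η‖ ^ 2) {i : ι}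
    (hK : K i ≠ ⊥) : ε ≤ c i ^ 2 := by
  classical
  obtain ⟨u, hu, hu0⟩ := (Submodule.ne_bot_iff _).mp hK
  have hεu := h (PiLp.single 2 i ⟨u, hu⟩)
  rw [weightedSum_single, PiLp.norm_single, norm_smul, Complex.norm_real, Real.norm_eq_abs,
    mul_pow, sq_abs, Submodule.coe_norm] at hεu
  exact le_of_mul_le_mul_right hεu (pow_pos (norm_pos_iff.mpr hu0) 2)

variable [CompleteSpace H] [∀ i, CompleteSpace (K i)]

lemma adjoint_weightedSum : adjoint (weightedSum K c) = weightedProj K c := by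
  refine ((eq_adjoint_iff _ _).mpr fun x η => ?_).symm
  rw [PiLp.inner_apply, weightedSum_apply, inner_sum]
  refine Finset.sum_congr rfl fun i _ => ?_
  rw [weightedProj_apply, inner_smul_left, inner_smul_right, Complex.conj_ofReal,
    Submodule.inner_orthogonalProjectionOnto_eq_of_mem_right]

lemma weightedSum_comp_adjoint : weightedSum K c ∘L adjoint (weightedSum K c) =
    ∑ i, ((c i ^ 2 : ℝ) : ℂ) • (K i).starProjection := by
  ext x
  simp only [comp_apply, adjoint_weightedSum, weightedSum_apply, weightedProj_apply, sum_apply,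
    smul_apply, Submodule.starProjection_apply, Submodule.coe_smul, smul_smul,
    Complex.ofReal_mul, sq]

lemma sq_norm_weightedSum_le {ε : ℝ} (h : ∀ η, ε * ‖η‖ ^ 2 ≤ ‖weightedSum K c η‖ ^ 2)
    (hK : ∀ i, K i ≠ ⊥) (η : PiLp 2 (fun i => K i)) :
    ‖weightedSum K c η‖ ^ 2 ≤ (∑ i, c i ^ 2 - (Fintype.card ι - 1) * ε) * ‖η‖ ^ 2 := by
  classical
  have hterm : ∀ i, √(‖weightedSum K c (PiLp.single 2 i (η i))‖ ^ 2 -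
      ε * ‖(PiLp.single 2 i (η i) : PiLp 2 (fun i => K i))‖ ^ 2) =
      √(c i ^ 2 - ε) * ‖η i‖ := fun i => by
    rw [weightedSum_single, norm_smul, Complex.norm_real, Real.norm_eq_abs, mul_pow, sq_abs,
      PiLp.norm_single, Submodule.coe_norm, ← sub_mul, Real.sqrt_mul' _ (sq_nonneg _),
      Real.sqrt_sq (norm_nonneg _)]
  have hsub := sq_norm_apply_sum_sub_le h Finset.univ fun i => PiLp.single 2 i (η i)
  simp only [PiLp.sum_single, hterm] at hsub
  have hCS : (∑ i, √(c i ^ 2 - ε) * ‖η i‖) ^ 2 ≤ (∑ i, (c i ^ 2 - ε)) * ‖η‖ ^ 2 := by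
    rw [PiLp.norm_sq_eq_of_L2]
    refine (Finset.sum_mul_sq_le_sq_mul_sq _ _ _).trans_eq (congrArg (· * _) ?_)
    exact Finset.sum_congr rfl fun i _ => Real.sq_sqrt (sub_nonneg.mpr (le_sq_weight_of_ne_bot h (hK i)))
  rw [Finset.sum_sub_distrib, Finset.sum_const, Finset.card_univ, nsmul_eq_mul] at hCS
  linarith

end WeightedSum

/-- If `H₁, …, Hₙ` are nonzero linearly independent closed subspaces and
`α₁P₁ + … + αₙPₙ ≥ ε·I` (in the sense of quadratic forms), then
`α₁P₁ + … + αₙPₙ ≤ (Σ α_i − (n−1)ε)·I`. -/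
theorem stmt15 {H : Type*} [NormedAddCommGroup H] [InnerProductSpace ℂ H] [CompleteSpace H]
    {n : ℕ} (H_ : Fin n → Submodule ℂ H) [∀ i, CompleteSpace (H_ i)]
    (hne : ∀ i, H_ i ≠ ⊥)
    (hind : ∀ x : Fin n → H, (∀ i, x i ∈ H_ i) → ∑ i, x i = 0 → ∀ i, x i = 0)
    (α : Fin n → ℝ) (hα : ∀ i, 0 < α i) (ε : ℝ) (hε : 0 < ε)
    (hlower : ∀ x : H, ε * ‖x‖ ^ 2 ≤ ((inner ℂ ((∑ i, (α i : ℂ) • proj (H_ i)) x) x : ℂ)).re) :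
    ∀ x : H, ((inner ℂ ((∑ i, (α i : ℂ) • proj (H_ i)) x) x : ℂ)).re ≤
      (∑ i, α i - ((n : ℝ) - 1) * ε) * ‖x‖ ^ 2 := by
  set c : Fin n → ℝ := fun i => √(α i)
  have hc : ∀ i, c i ^ 2 = α i := fun i => Real.sq_sqrt (hα i).le
  set T := weightedSum H_ c
  have hquad : ∀ x, ((inner ℂ ((∑ i, (α i : ℂ) • proj (H_ i)) x) x : ℂ)).re =
      ‖ContinuousLinearMap.adjoint T x‖ ^ 2 := fun x => by
    rw [ContinuousLinearMap.apply_norm_sq_eq_inner_adjoint_left,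
      ContinuousLinearMap.adjoint_adjoint, weightedSum_comp_adjoint]
    simp only [hc, proj_eq_starProjection]
    rfl
  have hbelow : ∀ η, ε * ‖η‖ ^ 2 ≤ ‖T η‖ ^ 2 :=
    T.mul_sq_norm_le_of_adjoint
      (weightedSum_injective (fun i => (Real.sqrt_pos.mpr (hα i)).ne') hind) hε
      fun x => hquad x ▸ hlower x
  have hαε : ∀ i, ε ≤ α i := fun i => hc i ▸ le_sq_weight_of_ne_bot hbelow (hne i)
  have hC : 0 ≤ ∑ i, α i - ((n : ℝ) - 1) * ε := by
    have hsum := Finset.card_nsmul_le_sum Finset.univ α ε fun i _ => hαε i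
    rw [Finset.card_univ, Fintype.card_fin, nsmul_eq_mul] at hsum
    linarith
  intro x
  rw [hquad]
  refine T.sq_norm_adjoint_apply_le hC (fun η => ?_) x
  simpa [hc] using sq_norm_weightedSum_le hbelow hne η
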